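/- arXiv:2512.09951 — 11 statements merged into one kernel-verified Lean document; each statement's English description precedes it below -/
import Mathlib

section
/- If b, c > 0, q > 1, t₀ > 0, and the initial values satisfy x₀ > 0, y₀ > 0, z₀ ≥ 0, then the solutions of the quantum SIR recurrence remain positive for all times: xₙ > 0, yₙ > 0 and zₙ ≥ 0 for every n ≥ 0. -/
open Finset Filter Topology

/-- In the recurrence, `β = 1 + b(q-1)tₙ`, `γ = 1 + c(q-1)tₙ` and `κ = c(q-1)tₙ`. -/
theorem sir_step_pos {x y z β γ κ : ℝ} (hx : 0 < x) (hy : 0 < y) (hz : 0 ≤ z)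
    (hβ : 0 < β) (hγ : 0 < γ) (hκ : 0 ≤ κ) :
    0 < x * (x + y) / (x + y * β) ∧
      0 < y * β * (x + y) / (γ * (x + y * β)) ∧
      0 ≤ κ * (y * β * (x + y)) / (γ * (x + y * β)) + z :=
  ⟨by positivity, by positivity, by positivity⟩

theorem mul_sub_one_mul_pos {r q t : ℝ} (hr : 0 < r) (hq : 1 < q) (ht : 0 < t) :
    0 < r * (q - 1) * t :=
  mul_pos (mul_pos hr (sub_pos.mpr hq)) ht

theorem quantum_sir_positivity
(b c q t₀ : ℝ) (x y z : ℕ → ℝ)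
    (hb : 0 < b) (hc : 0 < c) (hq : 1 < q) (ht : 0 < t₀)
    (hx0 : 0 < x 0) (hy0 : 0 < y 0) (hz0 : 0 ≤ z 0)
    (hrecx : ∀ n : ℕ, x (n + 1) =
      x n * (x n + y n) / (x n + y n * (1 + b * (q - 1) * (q ^ n * t₀))))
    (hrecy : ∀ n : ℕ, y (n + 1) =
      y n * (1 + b * (q - 1) * (q ^ n * t₀)) * (x n + y n) /
        ((1 + c * (q - 1) * (q ^ n * t₀)) *
          (x n + y n * (1 + b * (q - 1) * (q ^ n * t₀)))))
    (hrecz : ∀ n : ℕ, z (n + 1) =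
      c * (q - 1) * (q ^ n * t₀) *
        (y n * (1 + b * (q - 1) * (q ^ n * t₀)) * (x n + y n)) /
        ((1 + c * (q - 1) * (q ^ n * t₀)) *
          (x n + y n * (1 + b * (q - 1) * (q ^ n * t₀)))) + z n) :
    ∀ n : ℕ, 0 < x n ∧ 0 < y n ∧ 0 ≤ z n := by
  intro n
  induction n with
  | zero => exact ⟨hx0, hy0, hz0⟩
  | succ n ih =>
    obtain ⟨hx, hy, hz⟩ := ih
    have htn : 0 < q ^ n * t₀ := by
      have : 0 < q := by linarith
      positivity
    have hb' := mul_sub_one_mul_pos hb hq htn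
    have hc' := mul_sub_one_mul_pos hc hq htn
    rw [hrecx, hrecy, hrecz]
    exact sir_step_pos hx hy hz (by linarith) (by linarith) hc'.le
end

section
/- Let b, c > 0, q > 1 and t > 0, and consider the one-step update map of the quantum SIR model at time t, sending (x, y, z) with x, y, z ≥ 0 and x + y > 0 to (x(x+y)/(x + y(1+b(q−1)t)), y(1+b(q−1)t)(x+y)/((1+c(q−1)t)(x + y(1+b(q−1)t))), c(q−1)t·y(1+b(q−1)t)(x+y)/((1+c(q−1)t)(x + y(1+b(q−1)t))) + z). A point (x, y, z) is a fixed point of this map if and only if y = 0; equivalently, the fixed points are exactly the points (α, 0, β) with α > 0 and β ≥ 0. -/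
open Finset Filter Topology

theorem quantum_sir_fixed_points (b c q t : ℝ)
    (hb : 0 < b) (hc : 0 < c) (hq : 1 < q) (ht : 0 < t)
    (x y z : ℝ) (hx : 0 ≤ x) (hy : 0 ≤ y) (hz : 0 ≤ z) (hxy : 0 < x + y) :
    ((x * (x + y) / (x + y * (1 + b * (q - 1) * t)) = x ∧
      y * (1 + b * (q - 1) * t) * (x + y) /
        ((1 + c * (q - 1) * t) * (x + y * (1 + b * (q - 1) * t))) = y ∧
      c * (q - 1) * t * (y * (1 + b * (q - 1) * t) * (x + y)) /
        ((1 + c * (q - 1) * t) * (x + y * (1 + b * (q - 1) * t))) + z = z)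
      ↔ y = 0) ∧
    ((x * (x + y) / (x + y * (1 + b * (q - 1) * t)) = x ∧
      y * (1 + b * (q - 1) * t) * (x + y) /
        ((1 + c * (q - 1) * t) * (x + y * (1 + b * (q - 1) * t))) = y ∧
      c * (q - 1) * t * (y * (1 + b * (q - 1) * t) * (x + y)) /
        ((1 + c * (q - 1) * t) * (x + y * (1 + b * (q - 1) * t))) + z = z)
      ↔ ∃ α β : ℝ, 0 < α ∧ 0 ≤ β ∧ (x, y, z) = (α, 0, β)) := by
  have hq1 : 0 < q - 1 := by linarith
  have hB : 0 < b * (q - 1) * t := by positivity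
  have hC : 0 < c * (q - 1) * t := by positivity
  have hden : 0 < x + y * (1 + b * (q - 1) * t) := by nlinarith
  have hCpos : 0 < 1 + c * (q - 1) * t := by linarith
  have key : (x * (x + y) / (x + y * (1 + b * (q - 1) * t)) = x ∧
      y * (1 + b * (q - 1) * t) * (x + y) /
        ((1 + c * (q - 1) * t) * (x + y * (1 + b * (q - 1) * t))) = y ∧
      c * (q - 1) * t * (y * (1 + b * (q - 1) * t) * (x + y)) /
        ((1 + c * (q - 1) * t) * (x + y * (1 + b * (q - 1) * t))) + z = z)
      ↔ y = 0 := by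
    constructor
    · rintro ⟨-, -, h3⟩
      by_contra hyn
      have a : 0 < y := lt_of_le_of_ne hy (Ne.symm hyn)
      have hden2 : (1 + c * (q - 1) * t) * (x + y * (1 + b * (q - 1) * t)) ≠ 0 :=
        ne_of_gt (by positivity)
      field_simp at h3
      nlinarith [mul_pos (mul_pos (mul_pos hC a) (show 0 < 1 + (q - 1) * t * b by nlinarith)) hxy]
    · rintro rfl
      have hx0 : 0 < x := by linarith
      constructor
      · field_simp
        simp
      constructor
      · simp
      · simp
  exact ⟨key, by
    rw [key]
    constructor
    · rintro rfl
      exact ⟨x, z, by linarith, hz, by simp⟩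
    · rintro ⟨α, β, hα, hβ, h⟩
      simp at h
      exact h.2.1⟩
end

section
/- For every n ≥ 1, the susceptible component of the quantum SIR recurrence satisfies the explicit formula xₙ = x₀ · (κ̄+1)/(κ̄+1+b(q−1)t₀) · ∏_{i=0}^{n−2} (1 + κ̄·∏_{j=0}^{i} ξ_j)/(1 + b(q−1)q^{i+1}t₀ + κ̄·∏_{j=0}^{i} ξ_j), where an empty product equals 1. -/
open Finset Filter Topology

noncomputable def xiSeq (b c q t₀ : ℝ) (k : ℕ) : ℝ :=
  (1 + c * (q - 1) * q ^ k * t₀) / (1 + b * (q - 1) * q ^ k * t₀)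

noncomputable def aSeq (b c q t₀ κ : ℝ) (i : ℕ) : ℝ :=
  1 / (1 + b * (q - 1) * q ^ (i + 1) * t₀ /
    (1 + κ * ∏ j ∈ Finset.range (i + 1), xiSeq b c q t₀ j))

theorem quantum_sir_exact_x
(b c q t₀ : ℝ) (x y z : ℕ → ℝ)
    (hb : 0 < b) (hc : 0 < c) (hq : 1 < q) (ht : 0 < t₀)
    (hx0 : 0 < x 0) (hy0 : 0 < y 0) (hz0 : 0 ≤ z 0)
    (hrecx : ∀ n : ℕ, x (n + 1) =
      x n * (x n + y n) / (x n + y n * (1 + b * (q - 1) * (q ^ n * t₀))))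
    (hrecy : ∀ n : ℕ, y (n + 1) =
      y n * (1 + b * (q - 1) * (q ^ n * t₀)) * (x n + y n) /
        ((1 + c * (q - 1) * (q ^ n * t₀)) *
          (x n + y n * (1 + b * (q - 1) * (q ^ n * t₀)))))
    (hrecz : ∀ n : ℕ, z (n + 1) =
      c * (q - 1) * (q ^ n * t₀) *
        (y n * (1 + b * (q - 1) * (q ^ n * t₀)) * (x n + y n)) /
        ((1 + c * (q - 1) * (q ^ n * t₀)) *
          (x n + y n * (1 + b * (q - 1) * (q ^ n * t₀)))) + z n)
    (n : ℕ) (hn : 1 ≤ n) :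
    x n = x 0 * ((x 0 / y 0 + 1) / (x 0 / y 0 + 1 + b * (q - 1) * t₀)) *
      ∏ i ∈ Finset.range (n - 1),
        (1 + (x 0 / y 0) * ∏ j ∈ Finset.range (i + 1), xiSeq b c q t₀ j) /
          (1 + b * (q - 1) * q ^ (i + 1) * t₀ +
            (x 0 / y 0) * ∏ j ∈ Finset.range (i + 1), xiSeq b c q t₀ j) := by
  have hq1 : (0:ℝ) < q - 1 := by linarith
  have hqpos : (0:ℝ) < q := by linarith
  set κ := x 0 / y 0 with hκ
  -- positivity of x and y
  have hpos : ∀ m, 0 < x m ∧ 0 < y m := by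
    intro m
    induction m with
    | zero => exact ⟨hx0, hy0⟩
    | succ k ih =>
      obtain ⟨hxk, hyk⟩ := ih
      have hqk : (0:ℝ) < q ^ k := pow_pos hqpos k
      have hΔ : 0 < b * (q - 1) * (q ^ k * t₀) := by positivity
      have hden : 0 < x k + y k * (1 + b * (q - 1) * (q ^ k * t₀)) := by nlinarith
      have hcΔ : (0:ℝ) < 1 + c * (q - 1) * (q ^ k * t₀) := by positivity
      refine ⟨?_, ?_⟩
      · rw [hrecx k]
        exact div_pos (by positivity) hden
      · rw [hrecy k]
        exact div_pos (by positivity) (by positivity)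
  -- ratio formula
  have hratio : ∀ m, x m / y m = κ * ∏ j ∈ Finset.range m, xiSeq b c q t₀ j := by
    intro m
    induction m with
    | zero => simp [hκ]
    | succ k ih =>
      obtain ⟨hxk, hyk⟩ := hpos k
      have hqk : (0:ℝ) < q ^ k := pow_pos hqpos k
      have hΔ : 0 < b * (q - 1) * (q ^ k * t₀) := by positivity
      have hden : 0 < x k + y k * (1 + b * (q - 1) * (q ^ k * t₀)) := by nlinarith
      have hbΔ : (0:ℝ) < 1 + b * (q - 1) * (q ^ k * t₀) := by positivity
      have hcΔ : (0:ℝ) < 1 + c * (q - 1) * (q ^ k * t₀) := by positivity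
      have hbΔ' : (0:ℝ) < 1 + b * (q - 1) * q ^ k * t₀ := by nlinarith
      have hsum : 0 < x k + y k := by linarith
      rw [Finset.prod_range_succ, ← mul_assoc, ← ih, hrecx k, hrecy k, xiSeq,
        div_div_div_eq]
      field_simp
  -- per-step multiplicative formula
  set F : ℕ → ℝ := fun k =>
    (1 + κ * ∏ j ∈ Finset.range k, xiSeq b c q t₀ j) /
      (1 + b * (q - 1) * q ^ k * t₀ +
        κ * ∏ j ∈ Finset.range k, xiSeq b c q t₀ j) with hF
  have hstep : ∀ k, x (k + 1) = x k * F k := by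
    intro k
    obtain ⟨hxk, hyk⟩ := hpos k
    have hqk : (0:ℝ) < q ^ k := pow_pos hqpos k
    have hΔ : 0 < b * (q - 1) * (q ^ k * t₀) := by positivity
    have hden : 0 < x k + y k * (1 + b * (q - 1) * (q ^ k * t₀)) := by nlinarith
    have hP : κ * ∏ j ∈ Finset.range k, xiSeq b c q t₀ j = x k / y k :=
      (hratio k).symm
    rw [hrecx k, hF]
    simp only [hP]
    have hdenF : 0 < 1 + b * (q - 1) * q ^ k * t₀ + x k / y k := by
      have : 0 < x k / y k := div_pos hxk hyk
      nlinarith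
    field_simp
    ring
  -- product formula
  have hprod : ∀ m, x m = x 0 * ∏ k ∈ Finset.range m, F k := by
    intro m
    induction m with
    | zero => simp
    | succ k ih =>
      rw [hstep k, ih, Finset.prod_range_succ, mul_assoc]
  obtain ⟨m, rfl⟩ : ∃ m, n = m + 1 := ⟨n - 1, (Nat.succ_pred_eq_of_pos hn).symm⟩
  have hF0 : F 0 = (κ + 1) / (κ + 1 + b * (q - 1) * t₀) := by
    rw [hF]
    simp only [Finset.prod_range_zero, pow_zero, mul_one]
    ring_nf
  rw [hprod (m + 1), Finset.prod_range_succ', hF0]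
  simp only [Nat.add_sub_cancel, hF]
  ring
end

section
/- For every n ≥ 1, the infected component of the quantum SIR recurrence satisfies the explicit formula yₙ = (y₀/ξ₀) · (κ̄+1)/(κ̄+1+b(q−1)t₀) · ∏_{i=0}^{n−2} [ (1/ξ_{i+1}) · (1 + κ̄·∏_{j=0}^{i} ξ_j)/(1 + b(q−1)q^{i+1}t₀ + κ̄·∏_{j=0}^{i} ξ_j) ], where an empty product equals 1. -/
open Finset Filter Topology

theorem quantum_sir_exact_y
(b c q t₀ : ℝ) (x y z : ℕ → ℝ)
    (hb : 0 < b) (hc : 0 < c) (hq : 1 < q) (ht : 0 < t₀)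
    (hx0 : 0 < x 0) (hy0 : 0 < y 0) (hz0 : 0 ≤ z 0)
    (hrecx : ∀ n : ℕ, x (n + 1) =
      x n * (x n + y n) / (x n + y n * (1 + b * (q - 1) * (q ^ n * t₀))))
    (hrecy : ∀ n : ℕ, y (n + 1) =
      y n * (1 + b * (q - 1) * (q ^ n * t₀)) * (x n + y n) /
        ((1 + c * (q - 1) * (q ^ n * t₀)) *
          (x n + y n * (1 + b * (q - 1) * (q ^ n * t₀)))))
    (hrecz : ∀ n : ℕ, z (n + 1) =
      c * (q - 1) * (q ^ n * t₀) *
        (y n * (1 + b * (q - 1) * (q ^ n * t₀)) * (x n + y n)) /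
        ((1 + c * (q - 1) * (q ^ n * t₀)) *
          (x n + y n * (1 + b * (q - 1) * (q ^ n * t₀)))) + z n)
    (n : ℕ) (hn : 1 ≤ n) :
    y n = (y 0 / xiSeq b c q t₀ 0) *
      ((x 0 / y 0 + 1) / (x 0 / y 0 + 1 + b * (q - 1) * t₀)) *
      ∏ i ∈ Finset.range (n - 1),
        (1 / xiSeq b c q t₀ (i + 1) *
          ((1 + (x 0 / y 0) * ∏ j ∈ Finset.range (i + 1), xiSeq b c q t₀ j) /
            (1 + b * (q - 1) * q ^ (i + 1) * t₀ +
              (x 0 / y 0) * ∏ j ∈ Finset.range (i + 1), xiSeq b c q t₀ j))) := by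
  have hq0 : (0:ℝ) < q := lt_trans one_pos hq
  have hq1 : (0:ℝ) < q - 1 := sub_pos.mpr hq
  have hBpos : ∀ k : ℕ, 0 < b * (q - 1) * q ^ k * t₀ := fun k =>
    mul_pos (mul_pos (mul_pos hb hq1) (pow_pos hq0 k)) ht
  have hCpos : ∀ k : ℕ, 0 < c * (q - 1) * q ^ k * t₀ := fun k =>
    mul_pos (mul_pos (mul_pos hc hq1) (pow_pos hq0 k)) ht
  have hB1 : ∀ k : ℕ, 0 < 1 + b * (q - 1) * q ^ k * t₀ := fun k => by
    linarith [hBpos k]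
  have hC1 : ∀ k : ℕ, 0 < 1 + c * (q - 1) * q ^ k * t₀ := fun k => by
    linarith [hCpos k]
  have hxi : ∀ k : ℕ, 0 < xiSeq b c q t₀ k := fun k =>
    div_pos (hC1 k) (hB1 k)
  have hprod : ∀ m : ℕ, 0 < ∏ j ∈ Finset.range m, xiSeq b c q t₀ j := fun m =>
    Finset.prod_pos fun j _ => hxi j
  have hκ : 0 < x 0 / y 0 := div_pos hx0 hy0
  -- invariant: positivity and ratio
  have key : ∀ m : ℕ, 0 < x m ∧ 0 < y m ∧
      x m = y m * ((x 0 / y 0) * ∏ j ∈ Finset.range m, xiSeq b c q t₀ j) := by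
    intro m
    induction m with
    | zero =>
      refine ⟨hx0, hy0, ?_⟩
      simp only [Finset.range_zero, Finset.prod_empty, mul_one]
      field_simp
    | succ m ih =>
      obtain ⟨hxm, hym, hxy⟩ := ih
      have hBm := hB1 m
      have hCm := hC1 m
      have hBm' : (0:ℝ) < 1 + b * (q - 1) * (q ^ m * t₀) := by
        have := hBm; linarith [hBm, (by ring : b * (q - 1) * q ^ m * t₀ = b * (q - 1) * (q ^ m * t₀))]
      have hCm' : (0:ℝ) < 1 + c * (q - 1) * (q ^ m * t₀) := by
        linarith [hCm, (by ring : c * (q - 1) * q ^ m * t₀ = c * (q - 1) * (q ^ m * t₀))]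
      have hD : (0:ℝ) < x m + y m * (1 + b * (q - 1) * (q ^ m * t₀)) := by
        have := mul_pos hym hBm'
        linarith
      have hx1 : 0 < x (m + 1) := by
        rw [hrecx m]
        exact div_pos (mul_pos hxm (by linarith)) hD
      have hy1 : 0 < y (m + 1) := by
        rw [hrecy m]
        exact div_pos (mul_pos (mul_pos hym hBm') (by linarith)) (mul_pos hCm' hD)
      refine ⟨hx1, hy1, ?_⟩
      rw [hrecx m, hrecy m, Finset.prod_range_succ, hxy]
      unfold xiSeq
      field_simp
      ring
  -- main induction
  obtain ⟨k, rfl⟩ : ∃ k, n = k + 1 := ⟨n - 1, (Nat.succ_pred_eq_of_pos hn).symm⟩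
  clear hn
  induction k with
  | zero =>
    simp only [Nat.add_sub_cancel, Finset.range_zero, Finset.prod_empty, mul_one]
    rw [hrecy 0]
    unfold xiSeq
    have h0 : (q:ℝ) ^ (0:ℕ) = 1 := pow_zero q
    have hB0 := hB1 0
    have hC0 := hC1 0
    simp only [pow_zero, one_mul] at hB0 hC0 ⊢
    have hκ1 : (0:ℝ) < x 0 / y 0 + 1 + b * (q - 1) * t₀ := by
      have := hBpos 0; simp only [pow_zero] at this
      nlinarith [hκ]
    have hD0 : (0:ℝ) < x 0 + y 0 * (1 + b * (q - 1) * (1 * t₀)) := by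
      have := mul_pos hy0 (by nlinarith [hBpos 0, (pow_zero q)] : (0:ℝ) < 1 + b * (q - 1) * (1 * t₀))
      linarith
    field_simp
    ring
  | succ m ih =>
    have ihy := ih
    obtain ⟨hxm, hym, hxy⟩ := key (m + 1)
    have hBm := hB1 (m + 1)
    have hCm := hC1 (m + 1)
    have hr : 0 < (x 0 / y 0) * ∏ j ∈ Finset.range (m + 1), xiSeq b c q t₀ j :=
      mul_pos hκ (hprod (m + 1))
    simp only [Nat.add_sub_cancel] at ihy ⊢
    rw [Finset.prod_range_succ, ← mul_assoc, ← ihy, hrecy (m + 1), hxy]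
    unfold xiSeq
    have hBm' : (0:ℝ) < 1 + b * (q - 1) * (q ^ (m + 1) * t₀) := by
      linarith [hBm, (by ring : b * (q - 1) * q ^ (m+1) * t₀ = b * (q - 1) * (q ^ (m+1) * t₀))]
    have hden : (0 : ℝ) < 1 + b * (q - 1) * q ^ (m + 1) * t₀ +
        (x 0 / y 0) * ∏ j ∈ Finset.range (m + 1), xiSeq b c q t₀ j := by
      linarith [hBm, hr]
    set r := (x 0 / y 0) * ∏ j ∈ Finset.range (m + 1), xiSeq b c q t₀ j with hrdef
    have hD : (0:ℝ) < y (m+1) * r + y (m+1) * (1 + b * (q - 1) * (q ^ (m+1) * t₀)) := by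
      have h1 := mul_pos hym hr
      have h2 := mul_pos hym hBm'
      linarith
    field_simp
    ring
end

section
/- For every n ≥ 1, the removed component of the quantum SIR recurrence satisfies the explicit formula zₙ = N − ( x₀ + (y₀/ξ₀)·∏_{i=0}^{n−2} (1/ξ_{i+1}) ) · (κ̄+1)/(κ̄+1+b(q−1)t₀) · ∏_{i=0}^{n−2} (1 + κ̄·∏_{j=0}^{i} ξ_j)/(1 + b(q−1)q^{i+1}t₀ + κ̄·∏_{j=0}^{i} ξ_j), where N = x₀ + y₀ + z₀ and an empty product equals 1. -/
open Finset Filter Topology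

private lemma qsir_div_eq (x0 y0 P F : ℝ) (hx0 : x0 ≠ 0) (hy0 : y0 ≠ 0) (hP : P ≠ 0) :
    x0 * F / (x0 / y0 * P) = y0 * P⁻¹ * F := by
  field_simp

private lemma qsir_step_eq (Y K β : ℝ) (hY : Y ≠ 0) (hK : 0 < K) (hβ : 0 < β) :
    Y * K * (Y * K + Y) / (Y * K + Y * (1 + β)) = Y * K * ((1 + K) / (1 + β + K)) := by
  have h2 : (1 : ℝ) + β + K ≠ 0 := by positivity
  have h3 : Y * K + Y * (1 + β) = Y * (1 + β + K) := by ring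
  rw [h3]
  field_simp
  ring

theorem quantum_sir_exact_z
(b c q t₀ : ℝ) (x y z : ℕ → ℝ)
    (hb : 0 < b) (hc : 0 < c) (hq : 1 < q) (ht : 0 < t₀)
    (hx0 : 0 < x 0) (hy0 : 0 < y 0) (hz0 : 0 ≤ z 0)
    (hrecx : ∀ n : ℕ, x (n + 1) =
      x n * (x n + y n) / (x n + y n * (1 + b * (q - 1) * (q ^ n * t₀))))
    (hrecy : ∀ n : ℕ, y (n + 1) =
      y n * (1 + b * (q - 1) * (q ^ n * t₀)) * (x n + y n) /
        ((1 + c * (q - 1) * (q ^ n * t₀)) *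
          (x n + y n * (1 + b * (q - 1) * (q ^ n * t₀)))))
    (hrecz : ∀ n : ℕ, z (n + 1) =
      c * (q - 1) * (q ^ n * t₀) *
        (y n * (1 + b * (q - 1) * (q ^ n * t₀)) * (x n + y n)) /
        ((1 + c * (q - 1) * (q ^ n * t₀)) *
          (x n + y n * (1 + b * (q - 1) * (q ^ n * t₀)))) + z n)
    (n : ℕ) (hn : 1 ≤ n) :
    z n = (x 0 + y 0 + z 0) -
      (x 0 + (y 0 / xiSeq b c q t₀ 0) *
          ∏ i ∈ Finset.range (n - 1), (1 / xiSeq b c q t₀ (i + 1))) *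
        ((x 0 / y 0 + 1) / (x 0 / y 0 + 1 + b * (q - 1) * t₀)) *
        ∏ i ∈ Finset.range (n - 1),
          (1 + (x 0 / y 0) * ∏ j ∈ Finset.range (i + 1), xiSeq b c q t₀ j) /
            (1 + b * (q - 1) * q ^ (i + 1) * t₀ +
              (x 0 / y 0) * ∏ j ∈ Finset.range (i + 1), xiSeq b c q t₀ j) := by
  have hq1 : (0:ℝ) < q - 1 := by linarith
  have hq0 : (0:ℝ) < q := by linarith
  have hQ : ∀ k : ℕ, 0 < q ^ k * t₀ := fun k => by positivity
  have hbp : ∀ k : ℕ, 0 < 1 + b * (q - 1) * (q ^ k * t₀) := fun k => by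
    nlinarith [mul_pos (mul_pos hb hq1) (hQ k)]
  have hcp : ∀ k : ℕ, 0 < 1 + c * (q - 1) * (q ^ k * t₀) := fun k => by
    nlinarith [mul_pos (mul_pos hc hq1) (hQ k)]
  have hxi : ∀ k : ℕ, 0 < xiSeq b c q t₀ k := fun k => by
    have h1 := hbp k; have h2 := hcp k
    have e1 : 1 + b * (q - 1) * q ^ k * t₀ = 1 + b * (q - 1) * (q ^ k * t₀) := by ring
    have e2 : 1 + c * (q - 1) * q ^ k * t₀ = 1 + c * (q - 1) * (q ^ k * t₀) := by ring
    rw [xiSeq, e1, e2]; exact div_pos h2 h1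
  have hxy : ∀ n, 0 < x n ∧ 0 < y n := by
    intro n; induction n with
    | zero => exact ⟨hx0, hy0⟩
    | succ n ih =>
      obtain ⟨hx, hy⟩ := ih
      have hD : 0 < x n + y n * (1 + b * (q - 1) * (q ^ n * t₀)) := by
        nlinarith [hbp n]
      constructor
      · rw [hrecx n]
        exact div_pos (mul_pos hx (by linarith)) hD
      · rw [hrecy n]
        exact div_pos (mul_pos (mul_pos hy (hbp n)) (by linarith))
          (mul_pos (hcp n) hD)
  have hcons : ∀ n, x n + y n + z n = x 0 + y 0 + z 0 := by
    intro n; induction n with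
    | zero => rfl
    | succ n ih =>
      obtain ⟨hx, hy⟩ := hxy n
      have hD : x n + y n * (1 + b * (q - 1) * (q ^ n * t₀)) ≠ 0 := by
        have : 0 < x n + y n * (1 + b * (q - 1) * (q ^ n * t₀)) := by nlinarith [hbp n]
        linarith
      have hC : (1 + c * (q - 1) * (q ^ n * t₀)) ≠ 0 := ne_of_gt (hcp n)
      rw [hrecx n, hrecy n, hrecz n, ← ih]
      field_simp
      ring
  -- the ratio x n / y n
  have hratio : ∀ n, x n / y n = (x 0 / y 0) * ∏ j ∈ Finset.range n, xiSeq b c q t₀ j := by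
    intro n; induction n with
    | zero => simp
    | succ n ih =>
      obtain ⟨hx, hy⟩ := hxy n
      have hD : x n + y n * (1 + b * (q - 1) * (q ^ n * t₀)) ≠ 0 := by
        have : 0 < x n + y n * (1 + b * (q - 1) * (q ^ n * t₀)) := by nlinarith [hbp n]
        linarith
      have hS : x n + y n ≠ 0 := by positivity
      have hB : (1 + b * (q - 1) * (q ^ n * t₀)) ≠ 0 := ne_of_gt (hbp n)
      have hC : (1 + c * (q - 1) * (q ^ n * t₀)) ≠ 0 := ne_of_gt (hcp n)
      have hB' : (1 + b * (q - 1) * q ^ n * t₀) ≠ 0 := by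
        rw [show 1 + b * (q - 1) * q ^ n * t₀ = 1 + b * (q - 1) * (q ^ n * t₀) by ring]
        exact hB
      rw [Finset.prod_range_succ, ← mul_assoc, ← ih, hrecx n, hrecy n, xiSeq]
      field_simp
  have hκpos : ∀ n, 0 < (x 0 / y 0) * ∏ j ∈ Finset.range n, xiSeq b c q t₀ j := by
    intro n
    exact mul_pos (div_pos hx0 hy0) (Finset.prod_pos fun j _ => hxi j)
  have hxeq : ∀ n, x n = y n * ((x 0 / y 0) * ∏ j ∈ Finset.range n, xiSeq b c q t₀ j) := by
    intro n
    obtain ⟨hx, hy⟩ := hxy n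
    rw [← hratio n, mul_comm, div_mul_cancel₀ _ (ne_of_gt hy)]
  -- closed form for x
  have hxf : ∀ n, x n = x 0 * ∏ k ∈ Finset.range n,
      (1 + (x 0 / y 0) * ∏ j ∈ Finset.range k, xiSeq b c q t₀ j) /
        (1 + b * (q - 1) * q ^ k * t₀ +
          (x 0 / y 0) * ∏ j ∈ Finset.range k, xiSeq b c q t₀ j) := by
    intro n; induction n with
    | zero => simp
    | succ n ih =>
      obtain ⟨hx, hy⟩ := hxy n
      have hβn : 0 < b * (q - 1) * q ^ n * t₀ := by positivity
      rw [Finset.prod_range_succ, ← mul_assoc, ← ih, hrecx n, hxeq n,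
        show (1 + b * (q - 1) * (q ^ n * t₀)) = (1 + b * (q - 1) * q ^ n * t₀) from by ring]
      exact qsir_step_eq _ _ _ (ne_of_gt hy) (hκpos n) hβn
  -- closed form for y
  have hyf : ∀ n, y n = y 0 * (∏ j ∈ Finset.range n, (1 / xiSeq b c q t₀ j)) *
      ∏ k ∈ Finset.range n,
      (1 + (x 0 / y 0) * ∏ j ∈ Finset.range k, xiSeq b c q t₀ j) /
        (1 + b * (q - 1) * q ^ k * t₀ +
          (x 0 / y 0) * ∏ j ∈ Finset.range k, xiSeq b c q t₀ j) := by
    intro n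
    obtain ⟨hx, hy⟩ := hxy n
    have hPpos : 0 < ∏ j ∈ Finset.range n, xiSeq b c q t₀ j :=
      Finset.prod_pos fun j _ => hxi j
    have hyn : y n = x n / ((x 0 / y 0) * ∏ j ∈ Finset.range n, xiSeq b c q t₀ j) := by
      rw [hxeq n, mul_div_assoc, div_self (ne_of_gt (hκpos n)), mul_one]
    rw [hyn, hxf n]
    simp only [one_div]
    rw [Finset.prod_inv_distrib]
    exact qsir_div_eq _ _ _ _ (ne_of_gt hx0) (ne_of_gt hy0) (ne_of_gt hPpos)
  -- assemble
  obtain ⟨m, rfl⟩ : ∃ m, n = m + 1 := ⟨n - 1, (Nat.succ_pred_eq_of_pos hn).symm⟩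
  simp only [Nat.add_sub_cancel]
  have hz : z (m + 1) = (x 0 + y 0 + z 0) - (x (m + 1) + y (m + 1)) := by
    have := hcons (m + 1); linarith
  rw [hz, hxf (m + 1), hyf (m + 1), Finset.prod_range_succ', Finset.prod_range_succ']
  simp only [Finset.prod_range_zero, pow_zero, mul_one, one_mul]
  ring
end

section
/- If b = c (i.e. the basic reproduction number R₀ = b/c equals 1), then ξ_k = 1 for all k ≥ 0, and the solutions of the quantum SIR recurrence satisfy xₙ → 0, yₙ → 0 and zₙ → N as n → ∞. -/
open Finset Filter Topology

set_option maxHeartbeats 1600000 in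
theorem quantum_sir_R0_eq_one
(b c q t₀ : ℝ) (x y z : ℕ → ℝ)
    (hb : 0 < b) (hc : 0 < c) (hq : 1 < q) (ht : 0 < t₀)
    (hx0 : 0 < x 0) (hy0 : 0 < y 0) (hz0 : 0 ≤ z 0)
    (hrecx : ∀ n : ℕ, x (n + 1) =
      x n * (x n + y n) / (x n + y n * (1 + b * (q - 1) * (q ^ n * t₀))))
    (hrecy : ∀ n : ℕ, y (n + 1) =
      y n * (1 + b * (q - 1) * (q ^ n * t₀)) * (x n + y n) /
        ((1 + c * (q - 1) * (q ^ n * t₀)) *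
          (x n + y n * (1 + b * (q - 1) * (q ^ n * t₀)))))
    (hrecz : ∀ n : ℕ, z (n + 1) =
      c * (q - 1) * (q ^ n * t₀) *
        (y n * (1 + b * (q - 1) * (q ^ n * t₀)) * (x n + y n)) /
        ((1 + c * (q - 1) * (q ^ n * t₀)) *
          (x n + y n * (1 + b * (q - 1) * (q ^ n * t₀)))) + z n)
    (hbc : b = c) :
    (∀ k : ℕ, xiSeq b c q t₀ k = 1) ∧
    Filter.Tendsto x Filter.atTop (nhds 0) ∧
    Filter.Tendsto y Filter.atTop (nhds 0) ∧
    Filter.Tendsto z Filter.atTop (nhds (x 0 + y 0 + z 0)) := by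
  subst hbc
  have hq1 : 0 < q - 1 := sub_pos.mpr hq
  have hqn : ∀ n : ℕ, (1:ℝ) ≤ q ^ n := fun n => one_le_pow₀ hq.le
  have hu : ∀ n : ℕ, 0 < b * (q - 1) * (q ^ n * t₀) := by
    intro n
    have : (0:ℝ) < q ^ n := lt_of_lt_of_le one_pos (hqn n)
    positivity
  -- positivity and constant ratio
  have key : ∀ n, 0 < x n ∧ 0 < y n ∧ y n * (x 0 + y 0) = y 0 * (x n + y n) := by
    intro n
    induction n with
    | zero => exact ⟨hx0, hy0, by ring⟩
    | succ n ih =>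
      obtain ⟨hxp, hyp, hr⟩ := ih
      set u := b * (q - 1) * (q ^ n * t₀) with hudef
      have hup := hu n
      have hD : 0 < x n + y n * (1 + u) := by nlinarith
      have hT : (0:ℝ) < 1 + u := by linarith
      have hx1 : x (n + 1) = x n * (x n + y n) / (x n + y n * (1 + u)) := hrecx n
      have hy1 : y (n + 1) = y n * (x n + y n) / (x n + y n * (1 + u)) := by
        rw [hrecy n]
        rw [show y n * (1 + u) * (x n + y n) = (1 + u) * (y n * (x n + y n)) by ring]
        rw [mul_div_mul_left _ _ hT.ne']
      refine ⟨?_, ?_, ?_⟩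
      · rw [hx1]; positivity
      · rw [hy1]; positivity
      · rw [hx1, hy1]
        field_simp
        ring_nf
        nlinarith [hr, sq_nonneg (x n + y n)]
  have hSpos : 0 < x 0 + y 0 := by positivity
  have hBpos : 0 < b * (q - 1) * t₀ := by positivity
  set ρ : ℝ := (x 0 + y 0) / (x 0 + y 0 + y 0 * (b * (q - 1) * t₀)) with hρ
  have hden : 0 < x 0 + y 0 + y 0 * (b * (q - 1) * t₀) := by positivity
  have hρ0 : 0 ≤ ρ := by positivity
  have hρ1 : ρ < 1 := by
    rw [hρ, div_lt_one hden]
    nlinarith [mul_pos hy0 hBpos]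
  -- decay of s_n = x n + y n
  have hdecay : ∀ n, x (n + 1) + y (n + 1) ≤ ρ * (x n + y n) := by
    intro n
    obtain ⟨hxp, hyp, hr⟩ := key n
    set u := b * (q - 1) * (q ^ n * t₀) with hudef
    have hup := hu n
    have hD : 0 < x n + y n * (1 + u) := by nlinarith
    have hT : (0:ℝ) < 1 + u := by linarith
    have hx1 : x (n + 1) = x n * (x n + y n) / (x n + y n * (1 + u)) := hrecx n
    have hy1 : y (n + 1) = y n * (x n + y n) / (x n + y n * (1 + u)) := by
      rw [hrecy n]
      rw [show y n * (1 + u) * (x n + y n) = (1 + u) * (y n * (x n + y n)) by ring]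
      rw [mul_div_mul_left _ _ hT.ne']
    rw [hx1, hy1, ← add_div, hρ, div_mul_eq_mul_div, mul_comm ((x 0 + y 0)) (x n + y n),
      div_le_div_iff₀ hD hden]
    have hB : b * (q - 1) * t₀ ≤ u := by
      rw [hudef]
      nlinarith [hqn n, hBpos]
    have h1 : 0 ≤ (x n + y n) * ((x 0 + y 0) * y n) * (u - b * (q - 1) * t₀) :=
      mul_nonneg (mul_nonneg (by positivity) (by positivity)) (sub_nonneg.mpr hB)
    have h2 : y n * (x 0 + y 0) * ((x n + y n) * (b * (q - 1) * t₀))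
        = y 0 * (x n + y n) * ((x n + y n) * (b * (q - 1) * t₀)) := by rw [hr]
    nlinarith [h1, h2]
  have hgeo : ∀ n, x n + y n ≤ (x 0 + y 0) * ρ ^ n := by
    intro n
    induction n with
    | zero => simp
    | succ n ih =>
      calc x (n + 1) + y (n + 1) ≤ ρ * (x n + y n) := hdecay n
        _ ≤ ρ * ((x 0 + y 0) * ρ ^ n) := mul_le_mul_of_nonneg_left ih hρ0
        _ = (x 0 + y 0) * ρ ^ (n + 1) := by ring
  have hgeolim : Tendsto (fun n => (x 0 + y 0) * ρ ^ n) atTop (nhds 0) := by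
    have := tendsto_pow_atTop_nhds_zero_of_lt_one hρ0 hρ1
    simpa using this.const_mul (x 0 + y 0)
  have hxlim : Tendsto x atTop (nhds 0) := by
    refine squeeze_zero (fun n => (key n).1.le) (fun n => ?_) hgeolim
    have := (key n).2.1
    linarith [hgeo n]
  have hylim : Tendsto y atTop (nhds 0) := by
    refine squeeze_zero (fun n => (key n).2.1.le) (fun n => ?_) hgeolim
    have := (key n).1
    linarith [hgeo n]
  -- conservation
  have hcons : ∀ n, x n + y n + z n = x 0 + y 0 + z 0 := by
    intro n
    induction n with
    | zero => rfl
    | succ n ih =>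
      obtain ⟨hxp, hyp, hr⟩ := key n
      set u := b * (q - 1) * (q ^ n * t₀) with hudef
      have hup := hu n
      have hT : (0:ℝ) < 1 + u := by linarith [hup]
      have hD : 0 < x n + y n * (1 + u) := add_pos hxp (mul_pos hyp hT)
      have hx1 : x (n + 1) = x n * (x n + y n) / (x n + y n * (1 + u)) := hrecx n
      have hy1 : y (n + 1) = y n * (x n + y n) / (x n + y n * (1 + u)) := by
        rw [hrecy n]
        rw [show y n * (1 + u) * (x n + y n) = (1 + u) * (y n * (x n + y n)) by ring]
        rw [mul_div_mul_left _ _ hT.ne']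
      have hz1 : z (n + 1) = u * (y n * (x n + y n)) / (x n + y n * (1 + u)) + z n := by
        rw [hrecz n]
        congr 1
        rw [show b * (q - 1) * (q ^ n * t₀) *
            (y n * (1 + b * (q - 1) * (q ^ n * t₀)) * (x n + y n)) =
            (1 + u) * (u * (y n * (x n + y n))) by rw [hudef]; ring]
        rw [show (1 + b * (q - 1) * (q ^ n * t₀)) *
            (x n + y n * (1 + b * (q - 1) * (q ^ n * t₀))) =
            (1 + u) * (x n + y n * (1 + u)) by rw [hudef]]
        rw [mul_div_mul_left _ _ hT.ne']
      have hsum : x n * (x n + y n) / (x n + y n * (1 + u))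
          + y n * (x n + y n) / (x n + y n * (1 + u))
          + u * (y n * (x n + y n)) / (x n + y n * (1 + u)) = x n + y n := by
        rw [← add_div, ← add_div,
          show x n * (x n + y n) + y n * (x n + y n) + u * (y n * (x n + y n))
            = (x n + y n) * (x n + y n * (1 + u)) by ring,
          mul_div_assoc, div_self hD.ne', mul_one]
      rw [hx1, hy1, hz1, ← ih]
      linarith only [hsum]
  have hzeq : ∀ n, z n = (x 0 + y 0 + z 0) - (x n + y n) := by
    intro n; linarith [hcons n]
  have hzlim : Tendsto z atTop (nhds (x 0 + y 0 + z 0)) := by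
    have h : Tendsto (fun n : ℕ => (x 0 + y 0 + z 0) - (x n + y n)) atTop
        (nhds ((x 0 + y 0 + z 0) - (0 + 0))) :=
      Filter.Tendsto.sub
        (tendsto_const_nhds : Tendsto (fun _ : ℕ => x 0 + y 0 + z 0) atTop
          (nhds (x 0 + y 0 + z 0)))
        (hxlim.add hylim)
    rw [show (x 0 + y 0 + z 0) - ((0:ℝ) + 0) = x 0 + y 0 + z 0 by ring] at h
    exact h.congr (fun n => (hzeq n).symm)
  refine ⟨?_, hxlim, hylim, hzlim⟩
  intro k
  unfold xiSeq
  apply div_self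
  have : (0:ℝ) < q ^ k := pow_pos (lt_trans one_pos hq) k
  positivity
end

section
/- Suppose b > c and that for all i ≥ 0 the condition ã_i := (1/ξ_{i+1})·1/(1 + b(q−1)q^{i+1}t₀/(1 + κ̄·∏_{j=0}^{i} ξ_j)) < 1 holds. Then the infected component of the quantum SIR recurrence converges to zero: yₙ → 0 as n → ∞. -/
open Finset Filter Topology

theorem quantum_sir_y_tendsto_zero
(b c q t₀ : ℝ) (x y : ℕ → ℝ)
    (hb : 0 < b) (hc : 0 < c) (hq : 1 < q) (ht : 0 < t₀)
    (hx0 : 0 < x 0) (hy0 : 0 < y 0)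
    (hrecx : ∀ n : ℕ, x (n + 1) =
      x n * (x n + y n) / (x n + y n * (1 + b * (q - 1) * (q ^ n * t₀))))
    (hrecy : ∀ n : ℕ, y (n + 1) =
      y n * (1 + b * (q - 1) * (q ^ n * t₀)) * (x n + y n) /
        ((1 + c * (q - 1) * (q ^ n * t₀)) *
          (x n + y n * (1 + b * (q - 1) * (q ^ n * t₀)))))
    (hbc : c < b)
    (hcond : ∀ i : ℕ,
      (1 / xiSeq b c q t₀ (i + 1)) * aSeq b c q t₀ (x 0 / y 0) i < 1) :
    Filter.Tendsto y Filter.atTop (nhds 0) := by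
  have hq0 : (0:ℝ) < q := by linarith
  have hτ : ∀ n : ℕ, 0 < (q - 1) * (q ^ n * t₀) := fun n =>
    mul_pos (by linarith) (mul_pos (pow_pos hq0 n) ht)
  have hA : ∀ n : ℕ, 0 < 1 + b * (q - 1) * (q ^ n * t₀) := fun n => by
    nlinarith [hτ n]
  have hC : ∀ n : ℕ, 0 < 1 + c * (q - 1) * (q ^ n * t₀) := fun n => by
    nlinarith [hτ n]
  have hC1 : ∀ n : ℕ, 1 ≤ 1 + c * (q - 1) * (q ^ n * t₀) := fun n => by
    nlinarith [hτ n]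
  -- positivity of x and y
  have hpos : ∀ n, 0 < x n ∧ 0 < y n := by
    intro n
    induction n with
    | zero => exact ⟨hx0, hy0⟩
    | succ n ih =>
      obtain ⟨hP, hY⟩ := ih
      have hD : 0 < x n + y n * (1 + b * (q - 1) * (q ^ n * t₀)) :=
        add_pos hP (mul_pos hY (hA n))
      constructor
      · rw [hrecx n]
        exact div_pos (mul_pos hP (add_pos hP hY)) hD
      · rw [hrecy n]
        exact div_pos (mul_pos (mul_pos hY (hA n)) (add_pos hP hY))
          (mul_pos (hC n) hD)
  have hD : ∀ n, 0 < x n + y n * (1 + b * (q - 1) * (q ^ n * t₀)) := fun n =>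
    add_pos (hpos n).1 (mul_pos (hpos n).2 (hA n))
  -- the total population is non-increasing
  have hsum : ∀ n, x (n + 1) + y (n + 1) ≤ x n + y n := by
    intro n
    obtain ⟨hP, hY⟩ := hpos n
    rw [hrecx n, hrecy n]
    have h1 : y n * (1 + b * (q - 1) * (q ^ n * t₀)) * (x n + y n) /
        ((1 + c * (q - 1) * (q ^ n * t₀)) *
          (x n + y n * (1 + b * (q - 1) * (q ^ n * t₀)))) ≤
        y n * (1 + b * (q - 1) * (q ^ n * t₀)) * (x n + y n) /
          (x n + y n * (1 + b * (q - 1) * (q ^ n * t₀))) := by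
      have hN : 0 ≤ y n * (1 + b * (q - 1) * (q ^ n * t₀)) * (x n + y n) :=
        le_of_lt (mul_pos (mul_pos hY (hA n)) (add_pos hP hY))
      gcongr
      · exact le_mul_of_one_le_left (hD n).le (hC1 n)
    have h2 : x n * (x n + y n) / (x n + y n * (1 + b * (q - 1) * (q ^ n * t₀))) +
        y n * (1 + b * (q - 1) * (q ^ n * t₀)) * (x n + y n) /
          (x n + y n * (1 + b * (q - 1) * (q ^ n * t₀))) = x n + y n := by
      rw [← add_div, div_eq_iff (hD n).ne']
      ring
    linarith
  have hsum0 : ∀ n, x n + y n ≤ x 0 + y 0 := by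
    intro n
    induction n with
    | zero => exact le_refl _
    | succ n ih => exact le_trans (hsum n) ih
  -- key bound on y (n+1)
  have hyb : ∀ n, y (n + 1) ≤ (x 0 + y 0) / (1 + c * (q - 1) * (q ^ n * t₀)) := by
    intro n
    obtain ⟨hP, hY⟩ := hpos n
    have step : y (n + 1) ≤ (x n + y n) / (1 + c * (q - 1) * (q ^ n * t₀)) := by
      rw [hrecy n, div_le_div_iff₀ (mul_pos (hC n) (hD n)) (hC n)]
      nlinarith [mul_pos (add_pos hP hY) (mul_pos (hC n) hP)]
    refine le_trans step ((div_le_div_iff_of_pos_right (hC n)).mpr (hsum0 n))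
  -- the bounding sequence tends to 0
  have hg : Tendsto (fun n : ℕ => (x 0 + y 0) / (1 + c * (q - 1) * (q ^ n * t₀)))
      atTop (nhds 0) := by
    apply Tendsto.div_atTop tendsto_const_nhds
    have h1 : Tendsto (fun n : ℕ => q ^ n) atTop atTop :=
      tendsto_pow_atTop_atTop_of_one_lt hq
    have h2 : Tendsto (fun n : ℕ => (c * (q - 1) * t₀) * q ^ n) atTop atTop := by
      exact Tendsto.const_mul_atTop (mul_pos (mul_pos hc (by linarith)) ht) h1
    have h3 := tendsto_atTop_add_const_left atTop 1 h2
    refine h3.congr fun n => by ring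
  have hsq : Tendsto (fun n : ℕ => y (n + 1)) atTop (nhds 0) :=
    squeeze_zero (fun n => (hpos (n + 1)).2.le) hyb hg
  exact (tendsto_add_atTop_iff_nat 1).mp hsq
end

section
/- Suppose b ≥ c (i.e. R₀ = b/c ≥ 1) and that for all i ≥ 0 the condition (1/ξ_{i+1})·1/(1 + b(q−1)q^{i+1}t₀/(1 + κ̄·∏_{j=0}^{i} ξ_j)) < 1 holds. Then the solutions of the quantum SIR recurrence converge to the equilibrium point (0, 0, N): xₙ → 0, yₙ → 0 and zₙ → N as n → ∞. -/
open Finset Filter Topology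

theorem quantum_sir_R0_ge_one_convergence
(b c q t₀ : ℝ) (x y z : ℕ → ℝ)
    (hb : 0 < b) (hc : 0 < c) (hq : 1 < q) (ht : 0 < t₀)
    (hx0 : 0 < x 0) (hy0 : 0 < y 0) (hz0 : 0 ≤ z 0)
    (hrecx : ∀ n : ℕ, x (n + 1) =
      x n * (x n + y n) / (x n + y n * (1 + b * (q - 1) * (q ^ n * t₀))))
    (hrecy : ∀ n : ℕ, y (n + 1) =
      y n * (1 + b * (q - 1) * (q ^ n * t₀)) * (x n + y n) /
        ((1 + c * (q - 1) * (q ^ n * t₀)) *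
          (x n + y n * (1 + b * (q - 1) * (q ^ n * t₀)))))
    (hrecz : ∀ n : ℕ, z (n + 1) =
      c * (q - 1) * (q ^ n * t₀) *
        (y n * (1 + b * (q - 1) * (q ^ n * t₀)) * (x n + y n)) /
        ((1 + c * (q - 1) * (q ^ n * t₀)) *
          (x n + y n * (1 + b * (q - 1) * (q ^ n * t₀)))) + z n)
    (hbc : c ≤ b)
    (hcond : ∀ i : ℕ,
      (1 / xiSeq b c q t₀ (i + 1)) * aSeq b c q t₀ (x 0 / y 0) i < 1) :
    Filter.Tendsto x Filter.atTop (nhds 0) ∧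
    Filter.Tendsto y Filter.atTop (nhds 0) ∧
    Filter.Tendsto z Filter.atTop (nhds (x 0 + y 0 + z 0)) := by
  set κ : ℝ := x 0 / y 0 with hκdef
  have hκpos : 0 < κ := div_pos hx0 hy0
  -- τ n
  have hτ : ∀ n : ℕ, 0 < (q - 1) * (q ^ n * t₀) := fun n =>
    mul_pos (by linarith) (mul_pos (pow_pos (by linarith) n) ht)
  have hBpos : ∀ n : ℕ, 0 < 1 + b * (q - 1) * (q ^ n * t₀) := fun n => by
    have := hτ n; nlinarith
  have hCpos : ∀ n : ℕ, 0 < 1 + c * (q - 1) * (q ^ n * t₀) := fun n => by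
    have := hτ n; nlinarith
  -- positivity of x, y
  have hpos : ∀ n : ℕ, 0 < x n ∧ 0 < y n := by
    intro n
    induction n with
    | zero => exact ⟨hx0, hy0⟩
    | succ n ih =>
      obtain ⟨hx, hy⟩ := ih
      have hD : 0 < x n + y n * (1 + b * (q - 1) * (q ^ n * t₀)) :=
        add_pos hx (mul_pos hy (hBpos n))
      constructor
      · rw [hrecx n]
        exact div_pos (mul_pos hx (add_pos hx hy)) hD
      · rw [hrecy n]
        exact div_pos (mul_pos (mul_pos hy (hBpos n)) (add_pos hx hy))
          (mul_pos (hCpos n) hD)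
  have hD : ∀ n : ℕ, 0 < x n + y n * (1 + b * (q - 1) * (q ^ n * t₀)) := fun n =>
    add_pos (hpos n).1 (mul_pos (hpos n).2 (hBpos n))
  -- z nonneg
  have hz : ∀ n : ℕ, 0 ≤ z n := by
    intro n
    induction n with
    | zero => exact hz0
    | succ n ih =>
      rw [hrecz n]
      have h1 : 0 ≤ c * (q - 1) * (q ^ n * t₀) *
          (y n * (1 + b * (q - 1) * (q ^ n * t₀)) * (x n + y n)) := by
        have hx := (hpos n).1
        have hy := (hpos n).2
        refine mul_nonneg (by nlinarith [hτ n]) ?_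
        exact (mul_pos (mul_pos hy (hBpos n)) (add_pos hx hy)).le
      have h2 : 0 < (1 + c * (q - 1) * (q ^ n * t₀)) *
          (x n + y n * (1 + b * (q - 1) * (q ^ n * t₀))) :=
        mul_pos (hCpos n) (hD n)
      have := div_nonneg h1 h2.le
      linarith
  -- conservation
  have hsum : ∀ n : ℕ, x n + y n + z n = x 0 + y 0 + z 0 := by
    intro n
    induction n with
    | zero => rfl
    | succ n ih =>
      rw [hrecx n, hrecy n, hrecz n, ← ih]
      have h1 : (x n + y n * (1 + b * (q - 1) * (q ^ n * t₀))) ≠ 0 := (hD n).ne'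
      have h2 : (1 + c * (q - 1) * (q ^ n * t₀)) ≠ 0 := (hCpos n).ne'
      rw [← add_assoc, div_add_div _ _ h1 (mul_ne_zero h2 h1), div_add_div _ _ (mul_ne_zero h1 (mul_ne_zero h2 h1)) (mul_ne_zero h2 h1), div_add' _ _ _ (mul_ne_zero (mul_ne_zero h1 (mul_ne_zero h2 h1)) (mul_ne_zero h2 h1)), div_eq_iff (mul_ne_zero (mul_ne_zero h1 (mul_ne_zero h2 h1)) (mul_ne_zero h2 h1))]
      ring
  -- κ bound : x n ≤ κ * y n
  have hκb : ∀ n : ℕ, x n ≤ κ * y n := by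
    intro n
    induction n with
    | zero => rw [hκdef, div_mul_cancel₀ _ hy0.ne']
    | succ n ih =>
      rw [hrecx n, hrecy n, ← mul_div_assoc,
        div_le_div_iff₀ (hD n) (mul_pos (hCpos n) (hD n))]
      have hx := (hpos n).1
      have hy := (hpos n).2
      have hτn := hτ n
      have hxy : 0 < x n + y n := add_pos hx hy
      have hDn := hD n
      -- reduces to x (1+cτ) ≤ κ y (1+bτ)
      have key : x n * (1 + c * (q - 1) * (q ^ n * t₀)) ≤
          κ * (y n * (1 + b * (q - 1) * (q ^ n * t₀))) := by
        calc x n * (1 + c * (q - 1) * (q ^ n * t₀))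
            ≤ κ * y n * (1 + c * (q - 1) * (q ^ n * t₀)) :=
              mul_le_mul_of_nonneg_right ih (hCpos n).le
          _ ≤ κ * (y n * (1 + b * (q - 1) * (q ^ n * t₀))) := by
              rw [mul_assoc]
              refine mul_le_mul_of_nonneg_left ?_ hκpos.le
              refine mul_le_mul_of_nonneg_left ?_ hy.le
              nlinarith
      have h := mul_le_mul_of_nonneg_right key (mul_nonneg hxy.le hDn.le)
      calc x n * (x n + y n) *
            ((1 + c * (q - 1) * (q ^ n * t₀)) *
              (x n + y n * (1 + b * (q - 1) * (q ^ n * t₀))))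
          = (x n * (1 + c * (q - 1) * (q ^ n * t₀))) *
              ((x n + y n) * (x n + y n * (1 + b * (q - 1) * (q ^ n * t₀)))) := by
            ring
        _ ≤ (κ * (y n * (1 + b * (q - 1) * (q ^ n * t₀)))) *
              ((x n + y n) * (x n + y n * (1 + b * (q - 1) * (q ^ n * t₀)))) := h
        _ = κ * (y n * (1 + b * (q - 1) * (q ^ n * t₀)) * (x n + y n)) *
              (x n + y n * (1 + b * (q - 1) * (q ^ n * t₀))) := by ring
  -- monotonicity : x (n+1) ≤ x n, hence x n ≤ x 0
  have hxmono : ∀ n : ℕ, x (n + 1) ≤ x n := by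
    intro n
    rw [hrecx n]
    rw [div_le_iff₀ (hD n)]
    have hx := (hpos n).1
    have hy := (hpos n).2
    nlinarith [mul_pos (mul_pos hx hy) (mul_pos hb (hτ n))]
  have hx0b : ∀ n : ℕ, x n ≤ x 0 := by
    intro n
    induction n with
    | zero => exact le_refl _ -- 
    | succ n ih => exact (hxmono n).trans ih
  -- bound y n ≤ N
  have hyN : ∀ n : ℕ, y n ≤ x 0 + y 0 + z 0 := by
    intro n
    have := hsum n
    have := (hpos n).1
    have := hz n
    linarith
  -- x (n+1) ≤ (κ+1) * x 0 / (b * ((q-1)*(q^n * t₀)))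
  have hxub : ∀ n : ℕ, x (n + 1) ≤ (κ + 1) * x 0 / (b * ((q - 1) * (q ^ n * t₀))) := by
    intro n
    rw [hrecx n]
    have hx := (hpos n).1
    have hy := (hpos n).2
    have hτn := hτ n
    have hbt : 0 < b * ((q - 1) * (q ^ n * t₀)) := mul_pos hb hτn
    rw [div_le_div_iff₀ (hD n) hbt]
    have h1 : x n * (x n + y n) ≤ x 0 * ((κ + 1) * y n) := by
      have : x n + y n ≤ (κ + 1) * y n := by nlinarith [hκb n]
      nlinarith [hx0b n]
    have h2 : b * ((q - 1) * (q ^ n * t₀)) * y n ≤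
        x n + y n * (1 + b * (q - 1) * (q ^ n * t₀)) := by nlinarith
    calc x n * (x n + y n) * (b * ((q - 1) * (q ^ n * t₀)))
        ≤ x 0 * ((κ + 1) * y n) * (b * ((q - 1) * (q ^ n * t₀))) := by
          nlinarith
      _ = (κ + 1) * x 0 * (b * ((q - 1) * (q ^ n * t₀)) * y n) := by ring
      _ ≤ (κ + 1) * x 0 * (x n + y n * (1 + b * (q - 1) * (q ^ n * t₀))) := by
          refine mul_le_mul_of_nonneg_left h2 ?_
          positivity
  -- y (n+1) ≤ (κ+1) * N / (c * ((q-1)*(q^n * t₀)))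
  have hyub : ∀ n : ℕ, y (n + 1) ≤
      (κ + 1) * (x 0 + y 0 + z 0) / (c * ((q - 1) * (q ^ n * t₀))) := by
    intro n
    rw [hrecy n]
    have hx := (hpos n).1
    have hy := (hpos n).2
    have hτn := hτ n
    have hct : 0 < c * ((q - 1) * (q ^ n * t₀)) := mul_pos hc hτn
    rw [div_le_div_iff₀ (mul_pos (hCpos n) (hD n)) hct]
    have hN : 0 < x 0 + y 0 + z 0 := by nlinarith
    have h1 : x n + y n ≤ (κ + 1) * y n := by nlinarith [hκb n]
    have h2 : y n * (1 + b * (q - 1) * (q ^ n * t₀)) ≤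
        x n + y n * (1 + b * (q - 1) * (q ^ n * t₀)) := by linarith
    -- LHS ≤ (κ+1) y n * cτ * D ≤ (κ+1) N * (1+cτ) * D
    calc y n * (1 + b * (q - 1) * (q ^ n * t₀)) * (x n + y n) *
          (c * ((q - 1) * (q ^ n * t₀)))
        ≤ (x n + y n * (1 + b * (q - 1) * (q ^ n * t₀))) * ((κ + 1) * y n) *
          (c * ((q - 1) * (q ^ n * t₀))) :=
          mul_le_mul_of_nonneg_right
            (mul_le_mul h2 h1 (add_pos hx hy).le (hD n).le) hct.le
      _ = (κ + 1) * (y n * (c * ((q - 1) * (q ^ n * t₀)))) *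
            (x n + y n * (1 + b * (q - 1) * (q ^ n * t₀))) := by ring
      _ ≤ (κ + 1) * ((x 0 + y 0 + z 0) * (1 + c * (q - 1) * (q ^ n * t₀))) *
            (x n + y n * (1 + b * (q - 1) * (q ^ n * t₀))) := by
          have hcle : c * ((q - 1) * (q ^ n * t₀)) ≤ 1 + c * (q - 1) * (q ^ n * t₀) := by
            nlinarith
          refine mul_le_mul_of_nonneg_right
            (mul_le_mul_of_nonneg_left
              (mul_le_mul (hyN n) hcle hct.le hN.le) (by positivity)) (hD n).le
      _ = (κ + 1) * (x 0 + y 0 + z 0) *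
          ((1 + c * (q - 1) * (q ^ n * t₀)) *
            (x n + y n * (1 + b * (q - 1) * (q ^ n * t₀)))) := by ring
  -- limit of C / (d * τ n)
  have hlim : ∀ C d : ℝ, 0 < d →
      Tendsto (fun n : ℕ => C / (d * ((q - 1) * (q ^ n * t₀)))) atTop (nhds 0) := by
    intro C d hd
    apply Tendsto.div_atTop tendsto_const_nhds
    have hq' : Tendsto (fun n : ℕ => q ^ n) atTop atTop :=
      tendsto_pow_atTop_atTop_of_one_lt hq
    have : Tendsto (fun n : ℕ => d * ((q - 1) * t₀) * q ^ n) atTop atTop :=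
      (hq'.const_mul_atTop (mul_pos hd (mul_pos (by linarith : (0:ℝ) < q - 1) ht)))
    refine this.congr (fun n => by ring)
  -- x → 0
  have hxlim : Tendsto x atTop (nhds 0) := by
    rw [← tendsto_add_atTop_iff_nat 1]
    refine squeeze_zero (fun n => (hpos (n + 1)).1.le) (fun n => hxub n) ?_
    exact hlim _ _ hb
  have hylim : Tendsto y atTop (nhds 0) := by
    rw [← tendsto_add_atTop_iff_nat 1]
    refine squeeze_zero (fun n => (hpos (n + 1)).2.le) (fun n => hyub n) ?_
    exact hlim _ _ hc
  refine ⟨hxlim, hylim, ?_⟩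
  have hzeq : ∀ n, z n = (x 0 + y 0 + z 0) - x n - y n := fun n => by
    have := hsum n; linarith
  have : Tendsto (fun n => (x 0 + y 0 + z 0) - x n - y n) atTop
      (nhds ((x 0 + y 0 + z 0) - 0 - 0)) :=
    (tendsto_const_nhds.sub hxlim).sub hylim
  have h0 : (x 0 + y 0 + z 0) - 0 - 0 = x 0 + y 0 + z 0 := by ring
  rw [← h0]
  exact this.congr fun n => (hzeq n).symm
end

section
/- If b < c, then the partial products ∏_{i=0}^{n−2} (1/ξ_{i+1}) converge to 0 as n → ∞. -/
/-! Writing `A_k = (q - 1) q^k t₀`, we have `ξ_k = (1 + c A_k) / (1 + b A_k)`. For `0 ≤ b < c` this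
ratio is increasing in `A_k ≥ 0` and exceeds `1` once `A_k > 0`; as `A_k` increases with `k`, every
factor `1 / ξ_{i+1}` lies in `[0, 1 / ξ_1]` with `1 / ξ_1 < 1`, so the partial products are squeezed
to `0` by a geometric sequence. -/

open Finset Filter Topology

theorem tendsto_prod_range_zero_of_le_of_lt_one {f : ℕ → ℝ} {r : ℝ} (hf : ∀ i, 0 ≤ f i)
    (hfr : ∀ i, f i ≤ r) (hr : r < 1) :
    Tendsto (fun n => ∏ i ∈ range n, f i) atTop (𝓝 0) := by
  refine squeeze_zero (fun n => prod_nonneg fun i _ => hf i) (fun n => ?_)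
    (tendsto_pow_atTop_nhds_zero_of_lt_one ((hf 0).trans (hfr 0)) hr)
  simpa using prod_le_prod (s := range n) (fun i _ => hf i) (fun i _ => hfr i)

section Ratio

variable {b c : ℝ}

theorem one_add_mul_div_one_add_mul_monotoneOn (hb : 0 ≤ b) (hbc : b ≤ c) :
    MonotoneOn (fun x : ℝ => (1 + c * x) / (1 + b * x)) (Set.Ici 0) := by
  intro x (hx : 0 ≤ x) y (hy : 0 ≤ y) hxy
  rw [div_le_div_iff₀ (by positivity) (by positivity)]
  nlinarith [mul_nonneg (sub_nonneg.mpr hbc) (sub_nonneg.mpr hxy)]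

theorem one_lt_one_add_mul_div_one_add_mul (hb : 0 ≤ b) (hbc : b < c) {x : ℝ} (hx : 0 < x) :
    1 < (1 + c * x) / (1 + b * x) := by
  rw [one_lt_div (by positivity)]
  nlinarith

end Ratio

section Xi

variable {b c q t₀ : ℝ}

theorem xiSeq_eq (b c q t₀ : ℝ) (k : ℕ) :
    xiSeq b c q t₀ k = (1 + c * ((q - 1) * q ^ k * t₀)) / (1 + b * ((q - 1) * q ^ k * t₀)) := by
  simp only [xiSeq, mul_assoc]

theorem xiSeq_monotone (hb : 0 ≤ b) (hbc : b ≤ c) (hq : 1 ≤ q) (ht : 0 ≤ t₀) :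
    Monotone (xiSeq b c q t₀) := by
  intro k l hkl
  have hq' : 0 ≤ q - 1 := sub_nonneg.mpr hq
  simp only [xiSeq_eq]
  refine one_add_mul_div_one_add_mul_monotoneOn hb hbc (by positivity : (0 : ℝ) ≤ _)
    (by positivity : (0 : ℝ) ≤ _) ?_
  gcongr

theorem one_lt_xiSeq (hb : 0 ≤ b) (hbc : b < c) (hq : 1 < q) (ht : 0 < t₀) (k : ℕ) :
    1 < xiSeq b c q t₀ k := by
  have hq' : 0 < q - 1 := sub_pos.mpr hq
  rw [xiSeq_eq]
  exact one_lt_one_add_mul_div_one_add_mul hb hbc (by positivity)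

end Xi

theorem inv_xi_partial_products_tendsto_zero_general (b c q t₀ : ℝ)
    (hb : 0 < b) (hq : 1 < q) (ht : 0 < t₀) (hbc : b < c) :
    Filter.Tendsto
      (fun n : ℕ => ∏ i ∈ Finset.range (n - 1), (1 / xiSeq b c q t₀ (i + 1)))
      Filter.atTop (nhds 0) := by
  have hξ : ∀ k, 1 < xiSeq b c q t₀ k := one_lt_xiSeq hb.le hbc hq ht
  refine (tendsto_prod_range_zero_of_le_of_lt_one (r := 1 / xiSeq b c q t₀ 1)
    (fun i => one_div_nonneg.mpr (zero_lt_one.trans (hξ _)).le)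
    (fun i => one_div_le_one_div_of_le (zero_lt_one.trans (hξ 1))
      (xiSeq_monotone hb.le hbc.le hq.le ht.le (by omega)))
    ((div_lt_one (zero_lt_one.trans (hξ 1))).mpr (hξ 1))).comp (tendsto_sub_atTop_nat 1)

theorem inv_xi_partial_products_tendsto_zero (b c q t₀ : ℝ)
    (hb : 0 < b) (hc : 0 < c) (hq : 1 < q) (ht : 0 < t₀) (hbc : b < c) :
    Filter.Tendsto
      (fun n : ℕ => ∏ i ∈ Finset.range (n - 1), (1 / xiSeq b c q t₀ (i + 1)))
      Filter.atTop (nhds 0) :=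
  inv_xi_partial_products_tendsto_zero_general b c q t₀ hb hq ht hbc
end

section
/- For the quantum SIR recurrence, the explicit formula for the susceptible component can be rewritten in simplified product form: for every n ≥ 1, xₙ = x₀ · (κ̄+1)/(κ̄+1+b(q−1)t₀) · ∏_{i=0}^{n−2} 1/(1 + b(q−1)q^{i+1}t₀/(1 + κ̄·∏_{j=0}^{i} ξ_j)), where an empty product equals 1. -/
open Finset Filter Topology

lemma qsir_ratio_step (X Y B C : ℝ) (hx : 0<X) (hy : 0<Y) (hB : 0<B) (hC : 0<C) :
    (X*(X+Y)/(X+Y*(1+B))) / (Y*(1+B)*(X+Y)/((1+C)*(X+Y*(1+B)))) = (X/Y)*((1+C)/(1+B)) := by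
  have h1B : (0:ℝ) < 1+B := by linarith
  have h1C : (0:ℝ) < 1+C := by linarith
  have hd : (0:ℝ) < X+Y*(1+B) := by nlinarith
  have hxy : (0:ℝ) < X+Y := by linarith
  field_simp

lemma qsir_step_lem (X Y B : ℝ) (hx : 0<X) (hy : 0<Y) (hB : 0<B) :
    X*(X+Y)/(X+Y*(1+B)) = X * (1/(1 + B/(1 + X/Y))) := by
  have h1B : (0:ℝ) < 1+B := by linarith
  have hd : (0:ℝ) < X+Y*(1+B) := by nlinarith
  have hr1 : (0:ℝ) < 1+X/Y := by positivity
  have hd2 : (0:ℝ) < 1 + B/(1+X/Y) := by positivity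
  field_simp
  ring

lemma qsir_base_lem (X Y B : ℝ) (hx : 0<X) (hy : 0<Y) (hB : 0<B) :
    X*(X+Y)/(X+Y*(1+B)) = X * ((X/Y+1)/(X/Y+1+B)) := by
  have hd : (0:ℝ) < X+Y*(1+B) := by nlinarith
  have hd2 : (0:ℝ) < X/Y+1+B := by positivity
  field_simp
  ring

theorem quantum_sir_exact_x_simplified
(b c q t₀ : ℝ) (x y : ℕ → ℝ)
    (hb : 0 < b) (hc : 0 < c) (hq : 1 < q) (ht : 0 < t₀)
    (hx0 : 0 < x 0) (hy0 : 0 < y 0)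
    (hrecx : ∀ n : ℕ, x (n + 1) =
      x n * (x n + y n) / (x n + y n * (1 + b * (q - 1) * (q ^ n * t₀))))
    (hrecy : ∀ n : ℕ, y (n + 1) =
      y n * (1 + b * (q - 1) * (q ^ n * t₀)) * (x n + y n) /
        ((1 + c * (q - 1) * (q ^ n * t₀)) *
          (x n + y n * (1 + b * (q - 1) * (q ^ n * t₀)))))
    (n : ℕ) (hn : 1 ≤ n) :
    x n = x 0 * ((x 0 / y 0 + 1) / (x 0 / y 0 + 1 + b * (q - 1) * t₀)) *
      ∏ i ∈ Finset.range (n - 1),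
        (1 / (1 + b * (q - 1) * q ^ (i + 1) * t₀ /
          (1 + (x 0 / y 0) * ∏ j ∈ Finset.range (i + 1), xiSeq b c q t₀ j))) := by
  have hq0 : (0:ℝ) < q := lt_trans one_pos hq
  have hqm : (0:ℝ) < q - 1 := sub_pos.mpr hq
  have hB : ∀ m : ℕ, 0 < b * (q - 1) * (q ^ m * t₀) := by
    intro m
    have : (0:ℝ) < q ^ m := pow_pos hq0 m
    positivity
  have hC : ∀ m : ℕ, 0 < c * (q - 1) * (q ^ m * t₀) := by
    intro m
    have : (0:ℝ) < q ^ m := pow_pos hq0 m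
    positivity
  have hpos : ∀ m : ℕ, 0 < x m ∧ 0 < y m := by
    intro m
    induction m with
    | zero => exact ⟨hx0, hy0⟩
    | succ m ih =>
      obtain ⟨hx, hy⟩ := ih
      have h1B : (0:ℝ) < 1 + b * (q - 1) * (q ^ m * t₀) := by linarith [hB m]
      have h1C : (0:ℝ) < 1 + c * (q - 1) * (q ^ m * t₀) := by linarith [hC m]
      have hd : (0:ℝ) < x m + y m * (1 + b * (q - 1) * (q ^ m * t₀)) := by
        have := mul_pos hy h1B; linarith
      constructor
      · rw [hrecx m]
        exact div_pos (mul_pos hx (by linarith)) hd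
      · rw [hrecy m]
        exact div_pos (mul_pos (mul_pos hy h1B) (by linarith)) (mul_pos h1C hd)
  have hr : ∀ m : ℕ, x m / y m = (x 0 / y 0) * ∏ j ∈ Finset.range m, xiSeq b c q t₀ j := by
    intro m
    induction m with
    | zero => simp
    | succ m ih =>
      obtain ⟨hx, hy⟩ := hpos m
      rw [Finset.prod_range_succ, ← mul_assoc, ← ih, hrecx m, hrecy m,
        qsir_ratio_step _ _ _ _ hx hy (hB m) (hC m), xiSeq]
      ring
  have hstep : ∀ m : ℕ, x (m + 1) =
      x m * (1 / (1 + b * (q - 1) * q ^ m * t₀ / (1 + x m / y m))) := by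
    intro m
    obtain ⟨hx, hy⟩ := hpos m
    rw [hrecx m, qsir_step_lem _ _ _ hx hy (hB m)]
    ring
  induction n, hn using Nat.le_induction with
  | base =>
    simp only [Nat.sub_self, Finset.range_zero, Finset.prod_empty, mul_one]
    rw [hrecx 0, qsir_base_lem _ _ _ hx0 hy0 (hB 0)]
    ring
  | succ m hm ih =>
    obtain ⟨k, rfl⟩ : ∃ k, m = k + 1 := ⟨m - 1, (Nat.succ_pred_eq_of_pos hm).symm⟩
    have hidx : k + 1 + 1 - 1 = k + 1 := rfl
    rw [hidx, Finset.prod_range_succ]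
    rw [Nat.add_sub_cancel] at ih
    rw [← mul_assoc, ← ih, ← hr (k + 1)]
    exact hstep (k + 1)
end

section
/- For the quantum SIR recurrence with b < c, the susceptible sequence xₙ is strictly decreasing and bounded below by 0, hence converges to a limit α ∈ [0, N], and consequently zₙ converges to N − α − lim yₙ; moreover yₙ → 0, so zₙ → N − α. -/
/-!
Each step moves mass between the compartments without creating or destroying it, so
`x + y + z` is conserved; `x` loses a positive amount at every step, so it decreases to a limit.
Since `y (n+1) ≤ (1 + b sₙ) / (1 + c sₙ) * y n` with step sizes `sₙ = (q - 1) qⁿ t₀ → ∞`, the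
ratio eventually stays below some `r < 1` because `b < c`, so `y` is dominated by a geometric
sequence and tends to `0`; conservation then gives the limit of `z`.
-/

open Filter Topology

/-- Step sizes `s n` generalize the `q`-grid, where `s n = (q - 1) * tₙ`; the `z`-equation is
the one of the quantum SIR model, rewritten through `y (n + 1)`. -/
structure IsSIRScheme (b c : ℝ) (s x y z : ℕ → ℝ) : Prop where
  x_succ : ∀ n, x (n + 1) = x n * (x n + y n) / (x n + y n * (1 + b * s n))
  y_succ : ∀ n, y (n + 1) =
    y n * (1 + b * s n) * (x n + y n) / ((1 + c * s n) * (x n + y n * (1 + b * s n)))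
  z_succ : ∀ n, z (n + 1) = c * s n * y (n + 1) + z n

theorem tendsto_zero_of_eventually_le_mul {u : ℕ → ℝ} {r : ℝ} (hr : r < 1)
    (hu : ∀ n, 0 ≤ u n) (h : ∀ᶠ n in atTop, u (n + 1) ≤ r * u n) :
    Tendsto u atTop (𝓝 0) := by
  refine (summable_of_ratio_norm_eventually_le hr ?_).tendsto_atTop_zero
  simpa only [Real.norm_of_nonneg (hu _)] using h

theorem eventually_one_add_mul_le_mul {b c r : ℝ} (h : b < r * c) :
    ∀ᶠ t in atTop, 1 + b * t ≤ r * (1 + c * t) := by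
  filter_upwards [eventually_ge_atTop ((1 - r) / (r * c - b))] with t ht
  rw [div_le_iff₀ (sub_pos.2 h)] at ht
  linarith

namespace IsSIRScheme

variable {b c : ℝ} {s x y z : ℕ → ℝ} {n : ℕ}

theorem pos (h : IsSIRScheme b c s x y z) (hb : 0 ≤ b) (hc : 0 ≤ c) (hs : ∀ n, 0 ≤ s n)
    (hx0 : 0 < x 0) (hy0 : 0 < y 0) (n : ℕ) : 0 < x n ∧ 0 < y n := by
  induction n with
  | zero => exact ⟨hx0, hy0⟩
  | succ n ih =>
    obtain ⟨hxn, hyn⟩ := ih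
    have := hs n
    rw [h.x_succ, h.y_succ]
    constructor <;> positivity

theorem x_succ_lt (h : IsSIRScheme b c s x y z) (hb : 0 < b) (hs : 0 < s n)
    (hxn : 0 < x n) (hyn : 0 < y n) : x (n + 1) < x n := by
  have hbs : 0 < y n * (b * s n) := by positivity
  rw [h.x_succ, div_lt_iff₀ (by positivity)]
  nlinarith

theorem y_succ_le (h : IsSIRScheme b c s x y z) (hb : 0 ≤ b) (hc : 0 ≤ c) (hs : 0 ≤ s n)
    (hxn : 0 < x n) (hyn : 0 < y n) {r : ℝ} (hr : 1 + b * s n ≤ r * (1 + c * s n)) :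
    y (n + 1) ≤ r * y n := by
  have hβ : 0 ≤ b * s n := by positivity
  have hD : 0 < x n + y n * (1 + b * s n) := by positivity
  rw [h.y_succ, div_le_iff₀ (by positivity)]
  calc y n * (1 + b * s n) * (x n + y n)
      ≤ y n * (r * (1 + c * s n)) * (x n + y n * (1 + b * s n)) := by
        gcongr <;> nlinarith
    _ = r * y n * ((1 + c * s n) * (x n + y n * (1 + b * s n))) := by ring

theorem add_add_succ_eq (h : IsSIRScheme b c s x y z) (hb : 0 ≤ b) (hc : 0 ≤ c) (hs : 0 ≤ s n)
    (hxn : 0 < x n) (hyn : 0 < y n) :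
    x (n + 1) + y (n + 1) + z (n + 1) = x n + y n + z n := by
  have := mul_nonneg hb hs
  have := mul_nonneg hc hs
  have hD : 0 < x n + y n * (1 + b * s n) := by positivity
  rw [h.z_succ, h.x_succ, h.y_succ]
  field_simp
  ring

theorem add_add_eq_add_add_zero (h : IsSIRScheme b c s x y z) (hb : 0 ≤ b) (hc : 0 ≤ c)
    (hs : ∀ n, 0 ≤ s n) (hx0 : 0 < x 0) (hy0 : 0 < y 0) (n : ℕ) :
    x n + y n + z n = x 0 + y 0 + z 0 := by
  induction n with
  | zero => rfl
  | succ n ih =>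
    obtain ⟨hxn, hyn⟩ := h.pos hb hc hs hx0 hy0 n
    rw [h.add_add_succ_eq hb hc (hs n) hxn hyn, ih]

theorem tendsto_y_zero (h : IsSIRScheme b c s x y z) (hb : 0 ≤ b) (hbc : b < c)
    (hs : ∀ n, 0 ≤ s n) (hs_top : Tendsto s atTop atTop) (hx0 : 0 < x 0) (hy0 : 0 < y 0) :
    Tendsto y atTop (𝓝 0) := by
  have hc : 0 < c := hb.trans_lt hbc
  have hpos := h.pos hb hc.le hs hx0 hy0
  obtain ⟨m, hbm, hmc⟩ := exists_between hbc
  have hm : b < m / c * c := by rwa [div_mul_cancel₀ _ hc.ne']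
  refine tendsto_zero_of_eventually_le_mul ((div_lt_one hc).2 hmc) (fun n => (hpos n).2.le) ?_
  filter_upwards [hs_top.eventually (eventually_one_add_mul_le_mul hm)] with n hn
  exact h.y_succ_le hb hc.le (hs n) (hpos n).1 (hpos n).2 hn

end IsSIRScheme

theorem quantum_sir_R0_lt_one_full
(b c q t₀ : ℝ) (x y z : ℕ → ℝ)
    (hb : 0 < b) (hc : 0 < c) (hq : 1 < q) (ht : 0 < t₀)
    (hx0 : 0 < x 0) (hy0 : 0 < y 0) (hz0 : 0 ≤ z 0)
    (hrecx : ∀ n : ℕ, x (n + 1) =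
      x n * (x n + y n) / (x n + y n * (1 + b * (q - 1) * (q ^ n * t₀))))
    (hrecy : ∀ n : ℕ, y (n + 1) =
      y n * (1 + b * (q - 1) * (q ^ n * t₀)) * (x n + y n) /
        ((1 + c * (q - 1) * (q ^ n * t₀)) *
          (x n + y n * (1 + b * (q - 1) * (q ^ n * t₀)))))
    (hrecz : ∀ n : ℕ, z (n + 1) =
      c * (q - 1) * (q ^ n * t₀) *
        (y n * (1 + b * (q - 1) * (q ^ n * t₀)) * (x n + y n)) /
        ((1 + c * (q - 1) * (q ^ n * t₀)) *
          (x n + y n * (1 + b * (q - 1) * (q ^ n * t₀)))) + z n)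
    (hbc : b < c) :
    (∀ n : ℕ, x (n + 1) < x n) ∧ (∀ n : ℕ, 0 < x n) ∧
    ∃ α : ℝ, 0 ≤ α ∧ α ≤ x 0 + y 0 + z 0 ∧
      Filter.Tendsto x Filter.atTop (nhds α) ∧
      Filter.Tendsto y Filter.atTop (nhds 0) ∧
      Filter.Tendsto z Filter.atTop (nhds (x 0 + y 0 + z 0 - α)) := by
  set s : ℕ → ℝ := fun n => (q - 1) * (q ^ n * t₀)
  have hs : ∀ n, 0 < s n := fun n => mul_pos (sub_pos.2 hq) (by positivity)
  have hs_top : Tendsto s atTop atTop :=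
    ((tendsto_pow_atTop_atTop_of_one_lt hq).atTop_mul_const ht).const_mul_atTop (sub_pos.2 hq)
  have h : IsSIRScheme b c s x y z :=
    ⟨fun n => by rw [hrecx]; ring, fun n => by rw [hrecy]; ring,
      fun n => by rw [hrecz, hrecy]; ring⟩
  have hpos := h.pos hb.le hc.le (fun n => (hs n).le) hx0 hy0
  have hdec : ∀ n, x (n + 1) < x n := fun n => h.x_succ_lt hb (hs n) (hpos n).1 (hpos n).2
  have hbdd : BddBelow (Set.range x) := ⟨0, by rintro _ ⟨n, rfl⟩; exact (hpos n).1.le⟩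
  have htx := tendsto_atTop_ciInf (antitone_nat_of_succ_le fun n => (hdec n).le) hbdd
  have hty := h.tendsto_y_zero hb.le hbc (fun n => (hs n).le) hs_top hx0 hy0
  refine ⟨hdec, fun n => (hpos n).1, ⨅ n, x n, le_ciInf fun n => (hpos n).1.le,
    (ciInf_le hbdd 0).trans (by linarith), htx, hty, ?_⟩
  have htz := (tendsto_const_nhds (x := x 0 + y 0 + z 0)).sub htx |>.sub hty
  rw [sub_zero] at htz
  refine htz.congr fun n => ?_
  linarith [h.add_add_eq_add_add_zero hb.le hc.le (fun n => (hs n).le) hx0 hy0 n]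
end
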